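/- arXiv:2503.14992 — 3 statements merged into one kernel-verified Lean document; each statement's English description precedes it below -/
import Mathlib

section
/- Let μ be a probability measure on ℝ and let G_μ(z) = ∫ 1/(z−x) dμ(x) be its Cauchy transform on the upper half-plane H. Then for every z ∈ H, Im(1/G_μ(z)) ≥ Im z, with equality for some z ∈ H if and only if μ is a Dirac measure δ_a for some a ∈ ℝ. -/
/-!
Writing `f_z(x) = (z - x)⁻¹`, one has `Im f_z(x) = -Im z · |f_z(x)|²`, so
`Im (1 / G_μ(z)) = Im z · ∫ |f_z|² dμ / |∫ f_z dμ|²`. The ratio is at least `1` because the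
variance `∫ |f_z - ∫ f_z|² dμ = ∫ |f_z|² dμ - |∫ f_z dμ|²` is nonnegative, and it equals `1`
exactly when `f_z` is `μ`-a.e. constant; as `x ↦ f_z(x)` is injective, `μ` is then a Dirac mass.
-/

open MeasureTheory Complex

/-- The Cauchy transform `G_μ(z) = ∫ 1/(z − x) dμ(x)` of a measure on `ℝ`. -/
noncomputable def cauchyTransform (μ : Measure ℝ) (z : ℂ) : ℂ :=
  ∫ x, (z - (x : ℂ))⁻¹ ∂μ

section ComplexVariance

open scoped ComplexConjugate

variable {α : Type*} [MeasurableSpace α] {μ : Measure α} {f : α → ℂ}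

theorem MeasureTheory.Integrable.normSq_sub_const [IsFiniteMeasure μ] (hf : Integrable f μ)
    (hf2 : Integrable (fun x => normSq (f x)) μ) (c : ℂ) :
    Integrable (fun x => normSq (f x - c)) μ := by
  have hre : Integrable (fun x => (f x * conj c).re) μ := (hf.mul_const _).re
  simp_rw [normSq_sub]
  exact (hf2.add (integrable_const _)).sub (hre.const_mul 2)

variable [IsProbabilityMeasure μ]

theorem integral_normSq_sub_integral (hf : Integrable f μ)
    (hf2 : Integrable (fun x => normSq (f x)) μ) :
    ∫ x, normSq (f x - ∫ y, f y ∂μ) ∂μ = ∫ x, normSq (f x) ∂μ - normSq (∫ x, f x ∂μ) := by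
  set c := ∫ y, f y ∂μ
  have hcross : ∫ x, (f x * conj c).re ∂μ = normSq c := by
    have := integral_re (hf.mul_const (conj c))
    simp only [RCLike.re_to_complex] at this
    rw [this, integral_mul_const, mul_conj, ofReal_re]
  have hre : Integrable (fun x => (f x * conj c).re) μ := (hf.mul_const _).re
  have hsum : Integrable (fun x => normSq (f x) + normSq c) μ := hf2.add (integrable_const _)
  simp_rw [normSq_sub]
  rw [integral_sub hsum (hre.const_mul 2),
    integral_add hf2 (integrable_const _), integral_const_mul, hcross]
  simp only [integral_const, probReal_univ, one_smul]
  ring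

theorem normSq_integral_le_integral_normSq (hf : Integrable f μ)
    (hf2 : Integrable (fun x => normSq (f x)) μ) :
    normSq (∫ x, f x ∂μ) ≤ ∫ x, normSq (f x) ∂μ := by
  have : 0 ≤ ∫ x, normSq (f x - ∫ y, f y ∂μ) ∂μ := integral_nonneg fun x => normSq_nonneg _
  rw [integral_normSq_sub_integral hf hf2] at this
  linarith

theorem ae_eq_integral_of_normSq_integral_eq (hf : Integrable f μ)
    (hf2 : Integrable (fun x => normSq (f x)) μ)
    (h : normSq (∫ x, f x ∂μ) = ∫ x, normSq (f x) ∂μ) :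
    ∀ᵐ x ∂μ, f x = ∫ y, f y ∂μ := by
  have hvar : ∫ x, normSq (f x - ∫ y, f y ∂μ) ∂μ = 0 := by
    rw [integral_normSq_sub_integral hf hf2, h, sub_self]
  filter_upwards [(integral_eq_zero_iff_of_nonneg (fun x => normSq_nonneg _)
    (hf.normSq_sub_const hf2 _)).1 hvar] with x hx
  exact sub_eq_zero.1 (normSq_eq_zero.1 hx)

end ComplexVariance

theorem MeasureTheory.exists_eq_dirac_of_ae_eq_of_injective {α β : Type*} [MeasurableSpace α]
    {μ : Measure α} [IsProbabilityMeasure μ] {g : α → β} (hg : Function.Injective g) {c : β}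
    (h : ∀ᵐ x ∂μ, g x = c) : ∃ a, μ = Measure.dirac a := by
  obtain ⟨a, ha⟩ := h.exists
  have hae : ∀ᵐ x ∂μ, x = a := h.mono fun x hx => hg (hx.trans ha.symm)
  exact ⟨a, by simpa using (ProbabilityTheory.hasLaw_dirac_of_ae_eq (X := id) hae).map_eq⟩

theorem Complex.im_inv_eq_neg_im_mul_normSq_inv (w : ℂ) : (w⁻¹).im = -(w.im * normSq w⁻¹) := by
  rw [inv_im, map_inv₀]
  ring

section CauchyKernel

variable {μ : Measure ℝ} {z : ℂ}

theorem sub_ofReal_ne_zero_of_im_pos (hz : 0 < z.im) (x : ℝ) : z - x ≠ 0 :=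
  fun h => hz.ne' (by simpa using congrArg im h)

theorem norm_inv_sub_ofReal_le (hz : 0 < z.im) (x : ℝ) : ‖(z - x)⁻¹‖ ≤ z.im⁻¹ := by
  rw [norm_inv]
  refine inv_anti₀ hz ?_
  simpa using (z - x).im_le_norm

theorem injective_inv_sub_ofReal (z : ℂ) : Function.Injective fun x : ℝ => (z - x)⁻¹ :=
  fun _ _ h => ofReal_injective (sub_right_injective (inv_injective h))

theorem continuous_inv_sub_ofReal (hz : 0 < z.im) : Continuous fun x : ℝ => (z - x)⁻¹ :=
  (continuous_const.sub continuous_ofReal).inv₀ (sub_ofReal_ne_zero_of_im_pos hz)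

variable [IsFiniteMeasure μ]

theorem integrable_inv_sub_ofReal (hz : 0 < z.im) :
    Integrable (fun x : ℝ => (z - x)⁻¹) μ :=
  .of_bound (continuous_inv_sub_ofReal hz).aestronglyMeasurable _
    (ae_of_all _ (norm_inv_sub_ofReal_le hz))

theorem integrable_normSq_inv_sub_ofReal (hz : 0 < z.im) :
    Integrable (fun x : ℝ => normSq (z - x)⁻¹) μ := by
  refine .of_bound (continuous_normSq.comp (continuous_inv_sub_ofReal hz)).aestronglyMeasurable
    (z.im⁻¹ ^ 2) (ae_of_all _ fun x => ?_)
  rw [Real.norm_of_nonneg (normSq_nonneg _), ← Complex.sq_norm]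
  exact pow_le_pow_left₀ (norm_nonneg _) (norm_inv_sub_ofReal_le hz x) 2

theorem im_cauchyTransform (hz : 0 < z.im) :
    (cauchyTransform μ z).im = -(z.im * ∫ x, normSq (z - x)⁻¹ ∂μ) := by
  have him := integral_im (integrable_inv_sub_ofReal (μ := μ) hz)
  simp only [RCLike.im_to_complex] at him
  simp_rw [cauchyTransform, ← him, im_inv_eq_neg_im_mul_normSq_inv, sub_im, ofReal_im, sub_zero]
  rw [integral_neg, integral_const_mul]

theorem im_one_div_cauchyTransform (hz : 0 < z.im) :
    (1 / cauchyTransform μ z).im =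
      z.im * (∫ x, normSq (z - x)⁻¹ ∂μ) / normSq (cauchyTransform μ z) := by
  rw [one_div, inv_im, im_cauchyTransform hz, neg_neg]

theorem integral_normSq_inv_sub_ofReal_pos [NeZero μ] (hz : 0 < z.im) :
    0 < ∫ x, normSq (z - x)⁻¹ ∂μ := by
  have hsupp : Function.support (fun x : ℝ => normSq (z - x)⁻¹) = Set.univ :=
    Set.eq_univ_of_forall fun x =>
      (normSq_pos.2 (inv_ne_zero (sub_ofReal_ne_zero_of_im_pos hz x))).ne'
  rw [integral_pos_iff_support_of_nonneg (fun x => normSq_nonneg _)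
    (integrable_normSq_inv_sub_ofReal hz), hsupp, Measure.measure_univ_pos]
  exact NeZero.ne μ

theorem cauchyTransform_ne_zero [NeZero μ] (hz : 0 < z.im) : cauchyTransform μ z ≠ 0 := by
  intro h
  have him := im_cauchyTransform (μ := μ) hz
  rw [h, zero_im, zero_eq_neg] at him
  exact (mul_pos hz (integral_normSq_inv_sub_ofReal_pos hz)).ne' him

end CauchyKernel

/-- For a probability measure `μ` on `ℝ`, one has `Im (1/G_μ(z)) ≥ Im z` for all `z` in the
upper half-plane, with equality for some such `z` if and only if `μ` is a Dirac measure. -/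
theorem im_one_div_cauchyTransform_ge (μ : Measure ℝ) [IsProbabilityMeasure μ] :
    (∀ z : ℂ, 0 < z.im → z.im ≤ (1 / cauchyTransform μ z).im) ∧
    ((∃ z : ℂ, 0 < z.im ∧ (1 / cauchyTransform μ z).im = z.im) ↔
      ∃ a : ℝ, μ = Measure.dirac a) := by
  have hG : ∀ z : ℂ, 0 < z.im → 0 < normSq (cauchyTransform μ z) := fun z hz =>
    normSq_pos.2 (cauchyTransform_ne_zero hz)
  refine ⟨fun z hz => ?_, ⟨fun ⟨z, hz, heq⟩ => ?_, fun ⟨a, ha⟩ => ?_⟩⟩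
  · rw [im_one_div_cauchyTransform hz, le_div_iff₀ (hG z hz)]
    exact mul_le_mul_of_nonneg_left (normSq_integral_le_integral_normSq
      (integrable_inv_sub_ofReal hz) (integrable_normSq_inv_sub_ofReal hz)) hz.le
  · rw [im_one_div_cauchyTransform hz, div_eq_iff (hG z hz).ne', mul_right_inj' hz.ne'] at heq
    exact exists_eq_dirac_of_ae_eq_of_injective (injective_inv_sub_ofReal z)
      (ae_eq_integral_of_normSq_integral_eq (integrable_inv_sub_ofReal hz)
        (integrable_normSq_inv_sub_ofReal hz) heq.symm)
  · subst ha
    exact ⟨a + I, by simp, by simp [cauchyTransform, integral_dirac]⟩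
end

section
/- For 0 < α < 1 and 0 ≤ ρ ≤ 1, let η(z) = −(e^{−iρπ} z)^α on the upper half-plane (principal branch of the power on ℂ \ (−∞,0]). Then η maps the upper half-plane into ℂ \ [0,∞), satisfies arg z ≤ arg η(z) ≤ arg z + π for all z in the upper half-plane, and η(z) → 0 nontangentially as z → 0. -/
open Complex Filter Set
open scoped Topology

/-- The argument of a complex number normalized to lie in `[0, 2π)`. -/
noncomputable def posArg (z : ℂ) : ℝ :=
  if Complex.arg z < 0 then Complex.arg z + 2 * Real.pi else Complex.arg z

/-- The Stolz angle `Γ_{0,θ} = {z ≠ 0 : θ < arg z < π − θ}` at the origin. -/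
def stolzAngle (θ : ℝ) : Set ℂ :=
  {z : ℂ | z ≠ 0 ∧ θ < Complex.arg z ∧ Complex.arg z < Real.pi - θ}

open scoped Real

/-!
For `z` in the upper half-plane, `e^{-iρπ} z` has argument `arg z - ρπ ∈ (-π, π)`, so the
principal power multiplies this argument by `α` and negation adds `π`: the normalized argument
of `η(z)` is `α (arg z - ρπ) + π`, which lies strictly between `0` and `2π` and between
`arg z` and `arg z + π`. For `α > 0` the power `w ↦ w^α` is continuous at `0` with value `0`,
so `η(z) → 0` even without the Stolz-angle restriction.
-/

noncomputable def booleanStableEta (α ρ : ℝ) (z : ℂ) : ℂ :=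
  -((Complex.exp (-(ρ : ℂ) * Real.pi * Complex.I) * z) ^ (α : ℂ))

namespace Complex

lemma arg_exp_mul_I_mul {θ : ℝ} {z : ℂ} (hz : z ≠ 0) (hθ : θ + arg z ∈ Ioc (-π) π) :
    arg (exp (θ * I) * z) = θ + arg z := by
  have hz' : (0 : ℝ) < ‖z‖ := norm_pos_iff.mpr hz
  have hpolar : exp (θ * I) * z = ‖z‖ * exp (↑(θ + arg z) * I) := by
    conv_lhs => rw [← norm_mul_exp_arg_mul_I z]
    push_cast
    rw [add_mul, exp_add]
    ring
  rw [hpolar, arg_real_mul _ hz', exp_mul_I, arg_cos_add_sin_mul_I hθ]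

lemma arg_cpow_ofReal {x : ℂ} (hx : x ≠ 0) {y : ℝ} (hy : arg x * y ∈ Ioc (-π) π) :
    arg (x ^ (y : ℂ)) = arg x * y := by
  rw [cpow_ofReal, arg_real_mul _ (Real.rpow_pos_of_pos (norm_pos_iff.mpr hx) y),
    ofReal_cos, ofReal_sin, arg_cos_add_sin_mul_I hy]

lemma arg_mem_Ioo_of_im_pos {z : ℂ} (hz : 0 < z.im) : arg z ∈ Ioo 0 π :=
  ⟨(arg_nonneg_iff.mpr hz.le).lt_of_ne fun h => hz.ne' (arg_eq_zero_iff.mp h.symm).2,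
    arg_lt_pi_iff.mpr (Or.inr hz.ne')⟩

end Complex

lemma posArg_of_arg_nonneg {z : ℂ} (hz : 0 ≤ arg z) : posArg z = arg z :=
  if_neg hz.not_gt

lemma arg_ne_zero_of_posArg_pos {w : ℂ} (hw : 0 < posArg w) : arg w ≠ 0 := fun h => by
  rw [posArg_of_arg_nonneg h.ge, h] at hw
  exact hw.false

lemma posArg_neg {u : ℂ} (hu : u ≠ 0) (hπ : arg u < π) : posArg (-u) = arg u + π := by
  rcases lt_trichotomy u.im 0 with him | him | him
  · have hneg := arg_neg_eq_arg_add_pi_of_im_neg him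
    rw [posArg_of_arg_nonneg (by linarith [neg_pi_lt_arg u]), hneg]
  · have hre : 0 < u.re := by
      refine lt_of_le_of_ne ?_ fun hre => hu (Complex.ext hre.symm him)
      exact not_lt.mp fun hre => hπ.ne (arg_eq_pi_iff.mpr ⟨hre, him⟩)
    have hneg := arg_neg_eq_arg_add_pi_iff.mpr (Or.inr ⟨him, hre⟩)
    rw [posArg_of_arg_nonneg (by linarith [neg_pi_lt_arg u]), hneg]
  · have hneg := arg_neg_eq_arg_sub_pi_of_im_pos him
    rw [posArg, if_pos (by linarith [arg_le_pi u]), hneg]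
    ring

lemma posArg_booleanStableEta {α ρ : ℝ} (hα0 : 0 ≤ α) (hα1 : α ≤ 1) (hρ0 : 0 ≤ ρ) (hρ1 : ρ ≤ 1)
    {z : ℂ} (hz : 0 < z.im) :
    posArg (booleanStableEta α ρ z) = (-(ρ * π) + arg z) * α + π := by
  have hz0 : z ≠ 0 := fun h => by simp [h] at hz
  obtain ⟨harg0, hargπ⟩ := arg_mem_Ioo_of_im_pos hz
  have hrot_ne : exp (-(ρ : ℂ) * π * I) * z ≠ 0 := mul_ne_zero (exp_ne_zero _) hz0
  have hrot : arg (exp (-(ρ : ℂ) * π * I) * z) = -(ρ * π) + arg z := by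
    have hexp : exp (-(ρ : ℂ) * π * I) = exp (↑(-(ρ * π)) * I) := by push_cast; ring_nf
    rw [hexp, arg_exp_mul_I_mul hz0 ⟨by nlinarith, by nlinarith⟩]
  have hφ : |-(ρ * π) + arg z| < π := abs_lt.mpr ⟨by nlinarith, by nlinarith⟩
  have hψ : -π < (-(ρ * π) + arg z) * α ∧ (-(ρ * π) + arg z) * α < π := by
    refine abs_lt.mp ?_
    rw [abs_mul, abs_of_nonneg hα0]
    nlinarith [abs_nonneg (-(ρ * π) + arg z)]
  have hpow : arg ((exp (-(ρ : ℂ) * π * I) * z) ^ (α : ℂ)) = (-(ρ * π) + arg z) * α := by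
    rw [arg_cpow_ofReal hrot_ne (by rw [hrot]; exact ⟨hψ.1, hψ.2.le⟩), hrot]
  rw [booleanStableEta, posArg_neg (cpow_ne_zero_iff.mpr (Or.inl hrot_ne))
    (hpow ▸ hψ.2), hpow]

lemma tendsto_booleanStableEta_nhds_zero {α : ℝ} (hα : 0 < α) (ρ : ℝ) :
    Tendsto (booleanStableEta α ρ) (𝓝 0) (𝓝 0) := by
  have hcont : ContinuousAt (fun z : ℂ => z ^ (α : ℂ)) 0 :=
    continuousAt_cpow_const_of_re_pos (by simp) (by simpa using hα)
  have hη : ContinuousAt (booleanStableEta α ρ) 0 :=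
    (hcont.comp_of_eq (continuous_const_mul _).continuousAt (mul_zero _)).neg
  simpa [ContinuousAt, booleanStableEta, zero_cpow (ofReal_ne_zero.mpr hα.ne')] using hη

/-- For `0 < α < 1` and `0 ≤ ρ ≤ 1`, the map `η(z) = −(e^{−iρπ} z)^α` (principal branch) maps
the upper half-plane into `ℂ \ [0, ∞)`, satisfies `arg z ≤ arg η(z) ≤ arg z + π` there
(arguments normalized in `[0, 2π)`), and `η(z) → 0` nontangentially as `z → 0`. -/
theorem booleanStable_eta_properties (α ρ : ℝ)
    (hα0 : 0 < α) (hα1 : α < 1) (hρ0 : 0 ≤ ρ) (hρ1 : ρ ≤ 1) :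
    (∀ z : ℂ, 0 < z.im →
      (-((Complex.exp (-(ρ : ℂ) * Real.pi * Complex.I) * z) ^ (α : ℂ))
          ∉ {w : ℂ | w.im = 0 ∧ 0 ≤ w.re}) ∧
      posArg z ≤ posArg (-((Complex.exp (-(ρ : ℂ) * Real.pi * Complex.I) * z) ^ (α : ℂ))) ∧
      posArg (-((Complex.exp (-(ρ : ℂ) * Real.pi * Complex.I) * z) ^ (α : ℂ)))
          ≤ posArg z + Real.pi) ∧
    (∀ θ ∈ Set.Ioo 0 (Real.pi / 2),
      Tendsto (fun z : ℂ => -((Complex.exp (-(ρ : ℂ) * Real.pi * Complex.I) * z) ^ (α : ℂ)))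
        (𝓝[stolzAngle θ] 0) (𝓝 0)) := by
  refine ⟨fun z hz => ?_,
    fun θ _ => (tendsto_booleanStableEta_nhds_zero hα0 ρ).mono_left nhdsWithin_le_nhds⟩
  change booleanStableEta α ρ z ∉ _ ∧ posArg z ≤ posArg (booleanStableEta α ρ z) ∧
    posArg (booleanStableEta α ρ z) ≤ posArg z + π
  obtain ⟨harg0, hargπ⟩ := arg_mem_Ioo_of_im_pos hz
  have hη := posArg_booleanStableEta hα0.le hα1.le hρ0 hρ1 hz
  rw [posArg_of_arg_nonneg harg0.le, hη]
  refine ⟨fun hmem => ?_, ?_, ?_⟩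
  · have hpos : 0 < posArg (booleanStableEta α ρ z) := by
      rw [hη]
      nlinarith [mul_nonneg hα0.le harg0.le, mul_pos (sub_pos.mpr hα1) Real.pi_pos,
        mul_nonneg (mul_nonneg hα0.le (sub_nonneg.mpr hρ1)) Real.pi_pos.le]
    exact arg_ne_zero_of_posArg_pos hpos (arg_eq_zero_iff.mpr ⟨hmem.2, hmem.1⟩)
  · nlinarith [mul_nonneg (sub_nonneg.mpr hα1.le) (sub_nonneg.mpr hargπ.le),
      mul_nonneg (mul_nonneg hα0.le (sub_nonneg.mpr hρ1)) Real.pi_pos.le]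
  · nlinarith [mul_nonneg (mul_nonneg hα0.le hρ0) Real.pi_pos.le,
      mul_nonneg (sub_nonneg.mpr hα1.le) harg0.le]
end

section
/- Let ξ be the compositional inverse, defined in a neighborhood of 0, of the map z ↦ z/(1+z)^{1−α}, where 0 < α < 1. Then ξ has the power series expansion ξ(w) = Σ_{n≥1} (((1−α)n)_{n−1}/n!) w^n, where (x)_m = x(x−1)⋯(x−m+1) denotes the falling factorial (with (x)_0 = 1). -/
/-!
Write `F = X * (1 + X) ^ (-b)`, `b = 1 - α`, for the Taylor series of `z ↦ z (1 + z) ^ (α - 1)`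
and `c k` for the Taylor coefficients of `ξ`. Comparing Taylor coefficients in `ξ (F z) = z`
(Taylor's theorem with analytic remainder for `ξ`) gives `∑_{k ≤ n} c k • F ^ k ≡ X` modulo
`X ^ (n + 1)`. Differentiate and multiply by `(1 + X) ^ (b n) = (X / F) ^ n`: the coefficient of
`X ^ (n - 1)` in `(X / F) ^ n * F ^ (k - 1) * F'` is the residue of `F ^ (k - 1) * F' / F ^ n`,
which is `1` for `k = n` and `0` otherwise, being a derivative. Hence `n * c n` is the coefficient
`choose (b n) (n - 1)` of `X ^ (n - 1)` in `(1 + X) ^ (b n)`.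
-/

open Complex Filter
open scoped Topology

/-- The falling factorial `(x)_m = x(x−1)⋯(x−m+1)` of a real number, with `(x)_0 = 1`. -/
noncomputable def fallingFactorialReal (x : ℝ) (m : ℕ) : ℝ :=
  ∏ i ∈ Finset.range m, (x - i)

open PowerSeries Finset

namespace Ring

variable {R : Type*} [CommRing R] [BinomialRing R]

theorem factorial_mul_choose_eq_prod_range (r : R) (m : ℕ) :
    m.factorial * choose r m = ∏ i ∈ range m, (r - i) := by
  rw [← nsmul_eq_mul, ← descPochhammer_eq_factorial_smul_choose, ← Polynomial.aeval_eq_smeval,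
    ← descPochhammer_eval_eq_prod_range, Polynomial.aeval_def, Polynomial.eval₂_eq_eval_map,
    descPochhammer_map]

theorem succ_nsmul_choose_succ (r : R) (k : ℕ) :
    (k + 1) • choose r (k + 1) = r * choose (r - 1) k := by
  simpa [choose_one_right] using choose_smul_choose r (n := k + 1) (k := 1) (by omega)

end Ring

namespace PowerSeries

section BinomialRing

variable {R : Type*} [CommRing R] [BinomialRing R]

theorem derivative_binomialSeries (r : R) :
    d⁄dX R (binomialSeries R r) = r • binomialSeries R (r - 1) := by
  ext k
  simp only [coeff_derivative, coeff_smul, binomialSeries_coeff, smul_eq_mul, mul_one]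
  rw [mul_comm, ← Ring.succ_nsmul_choose_succ, nsmul_eq_mul]
  push_cast; ring

theorem binomialSeries_pow (r : R) (m : ℕ) :
    binomialSeries R r ^ m = binomialSeries R (m * r) := by
  induction m with
  | zero => simp
  | succ m ih => rw [pow_succ, ih, ← binomialSeries_add]; push_cast; ring_nf

end BinomialRing

variable {K : Type*} [Field K] [CharZero K]

theorem coeff_binomialSeries_sub_smul_X_mul (b : K) (m : ℕ) :
    coeff m (binomialSeries K (b * m) - b • (X * binomialSeries K (b * m - 1))) =
      if m = 0 then 1 else 0 := by
  rcases m with _ | j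
  · simp
  · have key := Ring.succ_nsmul_choose_succ (b * (j + 1 : ℕ)) j
    rw [nsmul_eq_mul] at key
    push_cast at key ⊢
    simp only [map_sub, coeff_smul, coeff_succ_X_mul, binomialSeries_coeff, smul_eq_mul, mul_one]
    apply mul_left_cancel₀ (Nat.cast_add_one_ne_zero j)
    linear_combination key

/- With `F = X * (1 + X) ^ (-b)`, the factor `(1 + X) ^ (b * n)` is `(X / F) ^ n`, so this
coefficient is the residue of `F ^ (k - 1) * F' / F ^ n`. -/
theorem coeff_binomialSeries_mul_pow_mul_derivative (b : K) {k n : ℕ} (hk : 1 ≤ k)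
    (hkn : k ≤ n) :
    coeff (n - 1) (binomialSeries K (b * n) *
      ((X * binomialSeries K (-b)) ^ (k - 1) * d⁄dX K (X * binomialSeries K (-b)))) =
      if k = n then 1 else 0 := by
  obtain ⟨m, rfl⟩ := Nat.exists_eq_add_of_le hkn
  have h1 : binomialSeries K (b * (k + m : ℕ)) * binomialSeries K (-b) ^ (k - 1) *
      binomialSeries K (-b) = binomialSeries K (b * m) := by
    rw [binomialSeries_pow, ← binomialSeries_add, ← binomialSeries_add]
    congr 1; push_cast [Nat.cast_sub hk]; ring
  have h2 : binomialSeries K (b * (k + m : ℕ)) * binomialSeries K (-b) ^ (k - 1) *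
      binomialSeries K (-b - 1) = binomialSeries K (b * m - 1) := by
    rw [binomialSeries_pow, ← binomialSeries_add, ← binomialSeries_add]
    congr 1; push_cast [Nat.cast_sub hk]; ring
  have hsplit : binomialSeries K (b * (k + m : ℕ)) *
      ((X * binomialSeries K (-b)) ^ (k - 1) * d⁄dX K (X * binomialSeries K (-b))) =
      X ^ (k - 1) * (binomialSeries K (b * m) - b • (X * binomialSeries K (b * m - 1))) := by
    rw [Derivation.leibniz, derivative_X, derivative_binomialSeries, ← h1, ← h2]
    simp only [smul_eq_C_mul, smul_eq_mul, map_neg]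
    ring
  rw [hsplit, coeff_X_pow_mul', if_pos (by omega), show k + m - 1 - (k - 1) = m by omega,
    coeff_binomialSeries_sub_smul_X_mul]
  simp

theorem lagrange_inversion_binomialSeries (b : K) {n : ℕ} (hn : 1 ≤ n) (c : ℕ → K)
    (h : ∀ m, 1 ≤ m → m ≤ n →
      coeff m (∑ k ∈ range (n + 1), c k • (X * binomialSeries K (-b)) ^ k) = coeff m X) :
    n * c n = Ring.choose (b * n) (n - 1) := by
  let F := X * binomialSeries K (-b)
  let W := binomialSeries K (b * n)
  let P := ∑ k ∈ range (n + 1), c k • F ^ k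
  have hP : coeff (n - 1) (W * d⁄dX K (X - P)) = 0 := by
    rw [coeff_mul]
    refine sum_eq_zero fun ⟨i, j⟩ hij => ?_
    rw [HasAntidiagonal.mem_antidiagonal] at hij
    rw [coeff_derivative, map_sub, h (j + 1) (by omega) (by omega), sub_self, zero_mul, mul_zero]
  rw [map_sub, derivative_X, mul_sub, mul_one, map_sub, sub_eq_zero] at hP
  calc (n : K) * c n
      = ∑ k ∈ range (n + 1),
          c k * ((k : K) * coeff (n - 1) (W * (F ^ (k - 1) * d⁄dX K F))) := by
        rw [sum_eq_single_of_mem n (self_mem_range_succ n) fun k hk_mem hkn => ?_]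
        · rw [coeff_binomialSeries_mul_pow_mul_derivative b hn le_rfl, if_pos rfl, mul_one,
            mul_comm]
        rcases Nat.eq_zero_or_pos k with rfl | hk_pos
        · simp
        · rw [coeff_binomialSeries_mul_pow_mul_derivative b hk_pos
            (mem_range_succ_iff.1 hk_mem), if_neg hkn]
          simp
    _ = coeff (n - 1) (W * d⁄dX K P) := by
        simp only [P, map_sum, mul_sum, Derivation.map_smul, Derivation.leibniz_pow]
        refine sum_congr rfl fun k _ => ?_
        rw [nsmul_eq_mul, smul_eq_mul, mul_smul_comm, map_smul, smul_eq_mul,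
          mul_left_comm W (k : K⟦X⟧), ← map_natCast (C (R := K)), coeff_C_mul]
    _ = Ring.choose (b * n) (n - 1) := by simp [← hP, W]

end PowerSeries

section TaylorSeries

variable {𝕜 : Type*} [NontriviallyNormedField 𝕜] {f g : 𝕜 → 𝕜}

noncomputable def taylorSeries (f : 𝕜 → 𝕜) : 𝕜⟦X⟧ :=
  mk fun k => iteratedDeriv k f 0 / k.factorial

theorem coeff_taylorSeries (f : 𝕜 → 𝕜) (k : ℕ) :
    coeff k (taylorSeries f) = iteratedDeriv k f 0 / k.factorial :=
  coeff_mk _ _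

theorem constantCoeff_taylorSeries (f : 𝕜 → 𝕜) : constantCoeff (taylorSeries f) = f 0 := by
  simp [← coeff_zero_eq_constantCoeff, coeff_taylorSeries]

theorem taylorSeries_congr (h : f =ᶠ[𝓝 0] g) : taylorSeries f = taylorSeries g := by
  ext k
  simp only [coeff_taylorSeries, h.iteratedDeriv_eq]

theorem taylorSeries_id : taylorSeries (fun z : 𝕜 => z) = X := by
  ext k
  rw [coeff_taylorSeries, iteratedDeriv_fun_id_zero, coeff_X]
  split_ifs with hk <;> simp [hk]

theorem taylorSeries_const_mul (c : 𝕜) (f : 𝕜 → 𝕜) :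
    taylorSeries (fun z => c * f z) = c • taylorSeries f := by
  ext k
  simp only [coeff_taylorSeries, coeff_smul, iteratedDeriv_const_mul_field, smul_eq_mul,
    mul_div_assoc]

variable [CompleteSpace 𝕜]

theorem taylorSeries_add (hf : AnalyticAt 𝕜 f 0) (hg : AnalyticAt 𝕜 g 0) :
    taylorSeries (fun z => f z + g z) = taylorSeries f + taylorSeries g := by
  ext k
  simp only [coeff_taylorSeries, map_add, iteratedDeriv_fun_add hf.contDiffAt hg.contDiffAt,
    add_div]

theorem taylorSeries_sum {ι : Type*} (s : Finset ι) {f : ι → 𝕜 → 𝕜}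
    (hf : ∀ i ∈ s, AnalyticAt 𝕜 (f i) 0) :
    taylorSeries (fun z => ∑ i ∈ s, f i z) = ∑ i ∈ s, taylorSeries (f i) := by
  ext k
  simp only [coeff_taylorSeries, map_sum, iteratedDeriv_fun_sum fun i hi => (hf i hi).contDiffAt,
    sum_div]

variable [CharZero 𝕜]

theorem taylorSeries_mul (hf : AnalyticAt 𝕜 f 0) (hg : AnalyticAt 𝕜 g 0) :
    taylorSeries (fun z => f z * g z) = taylorSeries f * taylorSeries g := by
  ext n
  rw [coeff_taylorSeries, iteratedDeriv_fun_mul hf.contDiffAt hg.contDiffAt, coeff_mul,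
    Nat.sum_antidiagonal_eq_sum_range_succ_mk, sum_div]
  refine sum_congr rfl fun i hi => ?_
  have hin : i ≤ n := Nat.lt_succ_iff.mp (mem_range.mp hi)
  rw [coeff_taylorSeries, coeff_taylorSeries, ← Nat.choose_mul_factorial_mul_factorial hin]
  have hchoose : (n.choose i : 𝕜) ≠ 0 := by exact_mod_cast (Nat.choose_pos hin).ne'
  push_cast
  simp only [mul_assoc, mul_div_mul_left _ _ hchoose]
  ring

theorem taylorSeries_pow (hf : AnalyticAt 𝕜 f 0) (k : ℕ) :
    taylorSeries (fun z => f z ^ k) = taylorSeries f ^ k := by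
  induction k with
  | zero =>
    ext k
    simp only [pow_zero, coeff_taylorSeries, iteratedDeriv_const, coeff_one]
    split_ifs with hk <;> simp [hk]
  | succ k ih =>
    simp only [pow_succ]
    rw [taylorSeries_mul (by fun_prop) hf, ih]

theorem coeff_taylorSeries_comp (hg : AnalyticAt 𝕜 g 0) (hf : AnalyticAt 𝕜 f 0)
    (hf0 : f 0 = 0) {N m : ℕ} (hm : m < N) :
    coeff m (taylorSeries (g ∘ f)) =
      coeff m (∑ k ∈ range N, coeff k (taylorSeries g) • taylorSeries f ^ k) := by
  obtain ⟨R, hR, hgR⟩ := hg.exists_eventuallyEq_sum_add_pow_mul N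
  have hR0 : AnalyticAt 𝕜 R (f 0) := by rwa [hf0]
  have hcomp : g ∘ f =ᶠ[𝓝 0] fun z =>
      ∑ k ∈ range N, coeff k (taylorSeries g) * f z ^ k + f z ^ N * R (f z) := by
    have hft : Tendsto f (𝓝 0) (𝓝 0) := by simpa [hf0] using hf.continuousAt.tendsto
    filter_upwards [hft.eventually hgR] with z hz
    simp only [Function.comp_apply, hz, coeff_taylorSeries, smul_eq_mul]
    congr 1
    exact sum_congr rfl fun k _ => by ring
  have hXf : X ∣ taylorSeries f := X_dvd_iff.mpr (by rw [constantCoeff_taylorSeries, hf0])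
  have hrem : coeff m (taylorSeries f ^ N * taylorSeries fun z => R (f z)) = 0 :=
    X_pow_dvd_iff.mp (dvd_mul_of_dvd_left (pow_dvd_pow_of_dvd hXf N) _) m hm
  rw [taylorSeries_congr hcomp, taylorSeries_add (by fun_prop) (by fun_prop),
    taylorSeries_sum _ fun k _ => by fun_prop, taylorSeries_mul (by fun_prop) (by fun_prop),
    taylorSeries_pow hf, map_add, hrem, add_zero]
  simp only [taylorSeries_const_mul, taylorSeries_pow hf]

end TaylorSeries

theorem taylorSeries_one_add_cpow (a : ℂ) :
    taylorSeries (fun z : ℂ => (1 + z) ^ a) = PowerSeries.binomialSeries ℂ a := by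
  have hp := Complex.one_add_cpow_hasFPowerSeriesAt_zero (a := a)
  have h := hp.eq_formalMultilinearSeries hp.analyticAt.hasFPowerSeriesAt
  rw [_root_.binomialSeries, FormalMultilinearSeries.ofScalars_series_eq_iff] at h
  ext k
  rw [coeff_taylorSeries, binomialSeries_coeff, ← congrFun h k, smul_eq_mul, mul_one]

theorem lagrange_inversion_coefficients_general (α : ℝ)
    (ξ : ℂ → ℂ) (hξ : AnalyticAt ℂ ξ 0)
    (hinv : ∀ᶠ z in 𝓝 (0 : ℂ), ξ (z * (1 + z) ^ ((α : ℂ) - 1)) = z) :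
    ∀ n : ℕ, 1 ≤ n →
      iteratedDeriv n ξ 0 = ((fallingFactorialReal ((1 - α) * n) (n - 1) : ℝ) : ℂ) := by
  intro n hn
  let f : ℂ → ℂ := fun z => z * (1 + z) ^ ((α : ℂ) - 1)
  have hg : AnalyticAt ℂ (fun z : ℂ => (1 + z) ^ ((α : ℂ) - 1)) 0 :=
    Complex.one_add_cpow_hasFPowerSeriesAt_zero.analyticAt
  have hid : AnalyticAt ℂ (fun z : ℂ => z) 0 := analyticAt_id
  have hf : AnalyticAt ℂ f 0 := hid.mul hg
  have hTf : taylorSeries f = X * PowerSeries.binomialSeries ℂ (-(1 - α : ℂ)) := by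
    rw [taylorSeries_mul hid hg, taylorSeries_id, taylorSeries_one_add_cpow, neg_sub]
  have hTξf : taylorSeries (ξ ∘ f) = X := (taylorSeries_congr hinv).trans taylorSeries_id
  have hlagrange := lagrange_inversion_binomialSeries (1 - α : ℂ) hn
    (fun k => coeff k (taylorSeries ξ)) fun m _ hm => by
      rw [← hTf, ← coeff_taylorSeries_comp hξ hf (by simp [f]) (Nat.lt_succ_of_le hm), hTξf]
  obtain ⟨m, rfl⟩ := Nat.exists_eq_add_of_le' hn
  calc iteratedDeriv (m + 1) ξ 0
      = m.factorial * ((m + 1 : ℕ) * coeff (m + 1) (taylorSeries ξ)) := by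
        rw [coeff_taylorSeries, Nat.factorial_succ]
        have hfact : (m.factorial : ℂ) ≠ 0 := Nat.cast_ne_zero.2 m.factorial_ne_zero
        push_cast
        field_simp
    _ = ∏ i ∈ range m, ((1 - α : ℂ) * (m + 1 : ℕ) - i) := by
        rw [hlagrange, Nat.add_sub_cancel, Ring.factorial_mul_choose_eq_prod_range]
    _ = _ := by
        simp [fallingFactorialReal]

/-- Let `ξ` be the local compositional inverse at `0` of `z ↦ z/(1+z)^{1−α}` (`0 < α < 1`,
principal branch). Then the Taylor coefficients of `ξ` at `0` are
`((1−α)n)_{n−1}/n!`, i.e. `ξ⁽ⁿ⁾(0) = ((1−α)n)_{n−1}` for `n ≥ 1` (Lagrange inversion). -/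
theorem lagrange_inversion_coefficients (α : ℝ) (hα0 : 0 < α) (hα1 : α < 1)
    (ξ : ℂ → ℂ) (hξ : AnalyticAt ℂ ξ 0) (hξ0 : ξ 0 = 0)
    (hinv : ∀ᶠ z in 𝓝 (0 : ℂ), ξ (z * (1 + z) ^ ((α : ℂ) - 1)) = z) :
    ∀ n : ℕ, 1 ≤ n →
      iteratedDeriv n ξ 0 = ((fallingFactorialReal ((1 - α) * n) (n - 1) : ℝ) : ℂ) :=
  lagrange_inversion_coefficients_general α ξ hξ hinv
end
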